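/- arXiv:1612.02901 — 4 statements merged into one kernel-verified Lean document; each statement's English description precedes it below -/
import Mathlib

section
/- Let g > 2 and λ ≥ 1 be integers, let M = (m_{i,j}) be a generalized Hadamard matrix GH(g,λ) over ℤ_g, and let ζ = exp(2π√(-1)/g) be the primitive g-th root of unity in ℂ. Then the (gλ)×(gλ) complex matrix H = (h_{i,j}) defined by h_{i,j} = ζ^{m_{i,j}} is an S-Hadamard matrix of order gλ. -/
/-! The entries are `h_{i,j} = ψ (m_{i,j})` for the standard additive character `ψ` of `ℤ_g`, so
`h_{k,j} · conj h_{ℓ,j} = ψ (m_{k,j} - m_{ℓ,j})`, and the GH property turns every off-diagonal row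
sum into `λ · ∑ₐ ψ a = 0`. Squaring the entries replaces `ψ` by `ψ²`, which is still nontrivial
because `g > 2`. -/

open scoped Classical

/-- An `n × n` complex matrix `H` is an S-Hadamard matrix of order `n` if
(1) `H * Hᴴ = n • 1`, (2) all entries are unimodular, and
(3) for all rows `k ≠ ℓ`, `∑ j, (H k j)² * conj ((H ℓ j)²) = 0`. -/
def IsSHadamard {n : ℕ} (H : Matrix (Fin n) (Fin n) ℂ) : Prop :=
  (H * H.conjTranspose = (n : ℂ) • 1) ∧
  (∀ i j, ‖H i j‖ = 1) ∧
  (∀ k l : Fin n, k ≠ l → ∑ j, (H k j) ^ 2 * (starRingEnd ℂ) ((H l j) ^ 2) = 0)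

/-- A generalized Hadamard matrix GH(g,λ) over the cyclic group `ℤ_g`:
a `(gλ) × (gλ)` matrix over `ZMod g` such that for all distinct rows `k ≠ ℓ`,
every element of `ℤ_g` occurs exactly `λ` times among the differences
`M k j - M ℓ j`. -/
def IsGH (g lam : ℕ) (M : Matrix (Fin (g * lam)) (Fin (g * lam)) (ZMod g)) : Prop :=
  ∀ k l : Fin (g * lam), k ≠ l → ∀ a : ZMod g,
    (Finset.univ.filter (fun j => M k j - M l j = a)).card = lam

open Finset ComplexConjugate

theorem Finset.sum_comp_eq_nsmul_sum_of_card_fiber {ι α β : Type*} [Fintype ι] [Fintype α]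
    [DecidableEq α] [AddCommMonoid β] {f : ι → α} {lam : ℕ} (hf : ∀ a, #{j | f j = a} = lam)
    (F : α → β) : ∑ j, F (f j) = lam • ∑ a, F a := by
  rw [← sum_fiberwise' univ f F, smul_sum]
  refine sum_congr rfl fun a _ => ?_
  rw [sum_const, hf]

namespace AddChar

variable {G ι : Type*} [AddCommGroup G] [Fintype G] [DecidableEq G] [Fintype ι]

theorem sum_mul_conj_eq_zero_of_card_fiber_sub {ψ : AddChar G ℂ} (hψ : ψ ≠ 1) {u v : ι → G}
    {lam : ℕ} (huv : ∀ a, #{j | u j - v j = a} = lam) :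
    ∑ j, ψ (u j) * conj (ψ (v j)) = 0 := by
  have hsub : ∀ j, ψ (u j) * conj (ψ (v j)) = ψ (u j - v j) := fun j => by
    rw [sub_eq_add_neg, map_add_eq_mul, map_neg_eq_conj]
  simp_rw [hsub]
  rw [Finset.sum_comp_eq_nsmul_sum_of_card_fiber huv, sum_eq_zero_of_ne_one hψ, smul_zero]

theorem isSHadamard_of_card_fiber_sub {n : ℕ} {ψ : AddChar G ℂ} (hψ₂ : ψ ^ 2 ≠ 1)
    {M : Matrix (Fin n) (Fin n) G} {lam : ℕ}
    (hM : ∀ k l, k ≠ l → ∀ a, #{j | M k j - M l j = a} = lam) :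
    IsSHadamard (Matrix.of fun i j => ψ (M i j)) := by
  have hψ1 : ψ ≠ 1 := fun h => hψ₂ (by rw [h, one_pow])
  refine ⟨?_, fun i j => ψ.norm_apply _, fun k l hkl => ?_⟩
  · ext k l
    simp only [Matrix.mul_apply, Matrix.conjTranspose_apply, Matrix.of_apply, Matrix.smul_apply,
      Matrix.one_apply, smul_eq_mul, RCLike.star_def]
    split_ifs with hkl
    · subst hkl
      simp [RCLike.mul_conj, ψ.norm_apply]
    · simpa using sum_mul_conj_eq_zero_of_card_fiber_sub hψ1 (hM k l hkl)
  · simp only [Matrix.of_apply, ← pow_apply]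
    exact sum_mul_conj_eq_zero_of_card_fiber_sub hψ₂ (hM k l hkl)

end AddChar

namespace ZMod

open Real Complex in
theorem exp_pow_val_eq_stdAddChar {N : ℕ} [NeZero N] (a : ZMod N) :
    exp (2 * π * I / N) ^ a.val = stdAddChar a := by
  rw [stdAddChar_apply, toCircle_apply, ← Complex.exp_nat_mul]
  ring_nf

theorem stdAddChar_pow_ne_one {N n : ℕ} [NeZero N] (hn0 : 0 < n) (hnN : n < N) :
    (stdAddChar : AddChar (ZMod N) ℂ) ^ n ≠ 1 := by
  rw [AddChar.pow_mulShift]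
  refine isPrimitive_stdAddChar N fun h => ?_
  rw [natCast_eq_zero_iff] at h
  exact (Nat.le_of_dvd hn0 h).not_gt hnN

end ZMod

theorem gh_gives_sHadamard_general (g lam : ℕ) (hg : 2 < g)
    (M : Matrix (Fin (g * lam)) (Fin (g * lam)) (ZMod g)) (hM : IsGH g lam M) :
    IsSHadamard (Matrix.of fun i j =>
      Complex.exp (2 * Real.pi * Complex.I / g) ^ (M i j).val) := by
  have : NeZero g := ⟨by omega⟩
  simp only [ZMod.exp_pow_val_eq_stdAddChar]
  exact AddChar.isSHadamard_of_card_fiber_sub (ZMod.stdAddChar_pow_ne_one two_pos hg) hM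

/-- If `g > 2`, `λ ≥ 1` and `M` is a GH(g,λ) over `ℤ_g`, then the matrix
`H` with entries `h_{i,j} = ζ^{m_{i,j}}`, where `ζ = exp(2π√(-1)/g)`, is an
S-Hadamard matrix of order `gλ`. -/
theorem gh_gives_sHadamard (g lam : ℕ) (hg : 2 < g) (hlam : 1 ≤ lam)
    (M : Matrix (Fin (g * lam)) (Fin (g * lam)) (ZMod g)) (hM : IsGH g lam M) :
    IsSHadamard (Matrix.of fun i j =>
      Complex.exp (2 * Real.pi * Complex.I / g) ^ (M i j).val) :=
  gh_gives_sHadamard_general g lam hg M hM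
end

section
/- Let H be an S-Hadamard matrix of order n whose first row h_1 is the all-one vector, and denote by h_r the r-th row of H. For 1 ≤ r ≠ s ≤ n+1 define vectors v^{r,s} = v^{s,r} ∈ ℂ^n by: v^{1,s} = h_{s-1} for 1 < s ≤ n+1; v^{2,s} = h_{s-1} ∘ h_{s-1} for 2 < s ≤ n+1; and v^{r,s} = h_{r-1} ∘ h_{s-1} for 2 < r < s ≤ n+1. Then for every r ∈ {1,…,n+1} and all distinct s, t ∈ {1,…,n+1} with s ≠ r and t ≠ r, the vectors v^{r,s} and v^{r,t} are orthogonal: ⟨v^{r,s}, v^{r,t}⟩ = 0. -/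
open scoped Classical

/-- The standard inner product on `ℂ^n`: `⟨x,y⟩ = ∑ i, x i * conj (y i)`. -/
noncomputable def sinner {n : ℕ} (x y : Fin n → ℂ) : ℂ :=
  ∑ i, x i * (starRingEnd ℂ) (y i)

/-- The row of `H` with 1-based label `m`, i.e. `ksRow H m = h_m` for
`1 ≤ m ≤ n` (junk value outside this range). -/
noncomputable def ksRow {n : ℕ} (H : Matrix (Fin n) (Fin n) ℂ) (m : ℕ) :
    Fin n → ℂ :=
  fun j => if h : m - 1 < n then H ⟨m - 1, h⟩ j else 0

/-- The vector `v^{r,s}` (1-based labels `1 ≤ r ≠ s ≤ n+1`), built from the rows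
of `H`: `v^{1,s} = h_{s-1}`, `v^{2,s} = h_{s-1} ∘ h_{s-1}` for `s > 2`, and
`v^{r,s} = h_{r-1} ∘ h_{s-1}` for `2 < r < s`, extended symmetrically
(`v^{s,r} = v^{r,s}`), where `∘` is the entrywise product. -/
noncomputable def ksVec {n : ℕ} (H : Matrix (Fin n) (Fin n) ℂ) (r s : ℕ) :
    Fin n → ℂ :=
  if min r s = 1 then ksRow H (max r s - 1)
  else if min r s = 2 then fun j => ksRow H (max r s - 1) j * ksRow H (max r s - 1) j
  else fun j => ksRow H (min r s - 1) j * ksRow H (max r s - 1) j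

/-!
Because `h_1 = 1`, for fixed `r` every `v^{r,s}` has one uniform shape: a row `h_{s-1}` when
`r = 1`, a square `h_m ∘ h_m` when `r = 2` (note `v^{2,1} = h_1 = h_1 ∘ h_1`), and a
product `h_{r-1} ∘ h_m` when `r ≥ 3` (note `v^{r,1} = h_{r-1} ∘ h_1` and
`v^{r,2} = h_{r-1} ∘ h_{r-1}`), where the label `m` depends injectively on `s`. Multiplying
both vectors by the unimodular `h_{r-1}` does not change their inner product, so everything
reduces to the orthogonality of distinct rows, or of their entrywise squares: conditions (1)
and (3) of an S-Hadamard matrix.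
-/

open Matrix

lemma sinner_mul_mul_of_norm_eq_one {n : ℕ} {a : Fin n → ℂ} (ha : ∀ j, ‖a j‖ = 1)
    (x y : Fin n → ℂ) : sinner (a * x) (a * y) = sinner x y := by
  refine Finset.sum_congr rfl fun j _ => ?_
  calc a j * x j * (starRingEnd ℂ) (a j * y j)
      = (a j * (starRingEnd ℂ) (a j)) * (x j * (starRingEnd ℂ) (y j)) := by
        rw [map_mul]; ring
    _ = x j * (starRingEnd ℂ) (y j) := by rw [Complex.mul_conj', ha j]; simp

namespace IsSHadamard

variable {n : ℕ} {H : Matrix (Fin n) (Fin n) ℂ}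

lemma sinner_row_eq_zero (hH : IsSHadamard H) {k l : Fin n} (hkl : k ≠ l) :
    sinner (H k) (H l) = 0 := by
  have h := congrFun (congrFun hH.1 k) l
  simpa [sinner, mul_apply, hkl] using h

lemma sinner_row_sq_eq_zero (hH : IsSHadamard H) {k l : Fin n} (hkl : k ≠ l) :
    sinner (H k * H k) (H l * H l) = 0 := by
  simpa only [sinner, Pi.mul_apply, sq] using hH.2.2 k l hkl

end IsSHadamard

section ksRow

variable {n : ℕ} (H : Matrix (Fin n) (Fin n) ℂ)

lemma ksRow_of_mem_Icc {m : ℕ} (hm : m ∈ Set.Icc 1 n) :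
    ksRow H m = H ⟨m - 1, by grind⟩ := by
  funext j
  rw [ksRow, dif_pos]

variable {H}

lemma IsSHadamard.norm_ksRow (hH : IsSHadamard H) {m : ℕ} (hm : m ∈ Set.Icc 1 n) (j : Fin n) :
    ‖ksRow H m j‖ = 1 := by
  rw [ksRow_of_mem_Icc H hm]
  exact hH.2.1 _ j

lemma IsSHadamard.sinner_ksRow_eq_zero (hH : IsSHadamard H) {a b : ℕ}
    (ha : a ∈ Set.Icc 1 n) (hb : b ∈ Set.Icc 1 n) (hab : a ≠ b) :
    sinner (ksRow H a) (ksRow H b) = 0 := by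
  rw [ksRow_of_mem_Icc H ha, ksRow_of_mem_Icc H hb]
  exact hH.sinner_row_eq_zero (by grind)

lemma IsSHadamard.sinner_ksRow_sq_eq_zero (hH : IsSHadamard H) {a b : ℕ}
    (ha : a ∈ Set.Icc 1 n) (hb : b ∈ Set.Icc 1 n) (hab : a ≠ b) :
    sinner (ksRow H a * ksRow H a) (ksRow H b * ksRow H b) = 0 := by
  rw [ksRow_of_mem_Icc H ha, ksRow_of_mem_Icc H hb]
  exact hH.sinner_row_sq_eq_zero (by grind)

end ksRow

/-- For `s ≠ r`, the label `m` with `v^{2,s} = h_m ∘ h_m` (if `r = 2`) or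
`v^{r,s} = h_{r-1} ∘ h_m` (if `r ≥ 3`), once `h_1 = 1`. -/
def ksPartner (r s : ℕ) : ℕ :=
  if s = 1 then 1 else if s = 2 then r - 1 else s - 1

lemma ksPartner_mem_Icc {n r s : ℕ} (hr : 2 ≤ r) (hrn : r ≤ n + 1)
    (hs : s ∈ Set.Icc 1 (n + 1)) : ksPartner r s ∈ Set.Icc 1 n := by
  simp only [ksPartner, Set.mem_Icc] at hs ⊢
  split_ifs <;> omega

lemma ksPartner_injOn (r : ℕ) : Set.InjOn (ksPartner r) {s | 1 ≤ s ∧ s ≠ r} := by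
  rintro s ⟨hs1, hsr⟩ t ⟨ht1, htr⟩ hst
  simp only [ksPartner] at hst
  split_ifs at hst <;> omega

section ksVec

variable {n : ℕ} (H : Matrix (Fin n) (Fin n) ℂ)

lemma ksVec_comm (r s : ℕ) : ksVec H r s = ksVec H s r := by
  rw [ksVec, ksVec, min_comm, max_comm]

lemma ksVec_one_left {s : ℕ} (hs : 2 ≤ s) : ksVec H 1 s = ksRow H (s - 1) := by
  rw [ksVec, if_pos (by omega), (by omega : max 1 s = s)]

lemma ksVec_two_left {s : ℕ} (hs : 3 ≤ s) :
    ksVec H 2 s = ksRow H (s - 1) * ksRow H (s - 1) := by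
  rw [ksVec, if_neg (by omega), if_pos (by omega), (by omega : max 2 s = s)]
  rfl

lemma ksVec_of_lt {r s : ℕ} (hr : 3 ≤ r) (hrs : r < s) :
    ksVec H r s = ksRow H (r - 1) * ksRow H (s - 1) := by
  rw [ksVec, if_neg (by omega), if_neg (by omega), (by omega : min r s = r),
    (by omega : max r s = s)]
  rfl

variable {H}

lemma ksVec_two_left_eq_sq (h1 : ksRow H 1 = 1) {s : ℕ} (hs : 1 ≤ s) (hs2 : s ≠ 2) :
    ksVec H 2 s = ksRow H (ksPartner 2 s) * ksRow H (ksPartner 2 s) := by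
  unfold ksPartner
  split_ifs with hs1
  · rw [hs1, ksVec_comm, ksVec_one_left H le_rfl, h1, one_mul]
  · exact ksVec_two_left H (by omega)

lemma ksVec_eq_mul_ksPartner (h1 : ksRow H 1 = 1) {r s : ℕ} (hr : 3 ≤ r) (hs : 1 ≤ s)
    (hsr : s ≠ r) : ksVec H r s = ksRow H (r - 1) * ksRow H (ksPartner r s) := by
  unfold ksPartner
  split_ifs with hs1 hs2
  · rw [hs1, ksVec_comm, ksVec_one_left H (by omega), h1, mul_one]
  · rw [hs2, ksVec_comm, ksVec_two_left H hr]
  · rcases lt_or_gt_of_ne hsr with hlt | hgt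
    · rw [ksVec_comm, ksVec_of_lt H (by omega) hlt, mul_comm]
    · exact ksVec_of_lt H hr hgt

end ksVec

/-- If `H` is an S-Hadamard matrix of order `n` whose first row is the all-one
vector, then for every `r ∈ {1,…,n+1}` and all distinct `s, t ∈ {1,…,n+1}`
different from `r`, the vectors `v^{r,s}` and `v^{r,t}` are orthogonal. -/
theorem ksVec_orthogonal {n : ℕ} (H : Matrix (Fin n) (Fin n) ℂ)
    (hH : IsSHadamard H) (hrow : ∀ j, ksRow H 1 j = 1)
    (r s t : ℕ) (hr1 : 1 ≤ r) (hr2 : r ≤ n + 1) (hs1 : 1 ≤ s) (hs2 : s ≤ n + 1)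
    (ht1 : 1 ≤ t) (ht2 : t ≤ n + 1) (hst : s ≠ t) (hsr : s ≠ r) (htr : t ≠ r) :
    sinner (ksVec H r s) (ksVec H r t) = 0 := by
  have h1 : ksRow H 1 = 1 := funext hrow
  rcases (by omega : r = 1 ∨ 2 ≤ r) with rfl | hr
  · rw [ksVec_one_left H (by omega), ksVec_one_left H (by omega)]
    exact hH.sinner_ksRow_eq_zero ⟨by omega, by omega⟩ ⟨by omega, by omega⟩ (by omega)
  have hpart : ksPartner r s ≠ ksPartner r t :=
    (ksPartner_injOn r).ne ⟨hs1, hsr⟩ ⟨ht1, htr⟩ hst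
  have hms := ksPartner_mem_Icc hr hr2 ⟨hs1, hs2⟩
  have hmt := ksPartner_mem_Icc hr hr2 ⟨ht1, ht2⟩
  rcases hr.eq_or_lt with rfl | hr3
  · rw [ksVec_two_left_eq_sq h1 hs1 hsr, ksVec_two_left_eq_sq h1 ht1 htr]
    exact hH.sinner_ksRow_sq_eq_zero hms hmt hpart
  · rw [ksVec_eq_mul_ksPartner h1 hr3 hs1 hsr, ksVec_eq_mul_ksPartner h1 hr3 ht1 htr,
      sinner_mul_mul_of_norm_eq_one (hH.norm_ksRow ⟨by omega, by omega⟩)]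
    exact hH.sinner_ksRow_eq_zero hms hmt hpart
end

section
/- Suppose n is even and there exists an S-Hadamard matrix of order n. Then there is no function f : ℂ^n → {0,1} such that for every orthogonal basis B of ℂ^n there exists exactly one vector x ∈ B with f(x) = 1. -/
open scoped Classical

/-- A finite set of vectors is an orthogonal basis of `ℂ^n` if its elements are
pairwise orthogonal (w.r.t. the standard inner product), linearly independent,
and span `ℂ^n`. -/
def IsOrthBasis {n : ℕ} (b : Finset (Fin n → ℂ)) : Prop :=
  (∀ x ∈ b, ∀ y ∈ b, x ≠ y → sinner x y = 0) ∧
  LinearIndependent ℂ (Subtype.val : {x // x ∈ b} → (Fin n → ℂ)) ∧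
  Submodule.span ℂ (b : Set (Fin n → ℂ)) = ⊤

/-!
From the rows `h₁, …, hₙ` of an S-Hadamard matrix form the vectors `w k l = h k ⊙ h l`
(entrywise product). For fixed `k`, the `w k l` are orthogonal because `h k` is unimodular,
and the `w k k` are orthogonal by the S-condition. A colouring as in the statement therefore
picks in each row `k` a unique `σ k` with `w k (σ k)` coloured, and a unique `k` with `w k k`
coloured. Since `w` is symmetric, `σ` is an involution of a set of even size with exactly one
fixed point, which is impossible.
-/

open Matrix

theorem Function.Involutive.odd_card_of_existsUnique_isFixedPt {α : Type*} [Fintype α]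
    {σ : α → α} (hσ : Function.Involutive σ) (h : ∃! a, σ a = a) : Odd (Fintype.card α) := by
  obtain ⟨a, ha, huniq⟩ := h
  let e : Function.End α := σ
  have hsq : e ^ 2 ^ 1 = 1 := funext hσ
  have hfix : Function.fixedPoints e = {a} := Set.ext fun x => ⟨huniq x, fun hx => hx ▸ ha⟩
  have hmod := Equiv.Perm.card_fixedPoints_modEq (p := 2) hsq
  simp only [hfix, Set.card_singleton] at hmod
  exact Nat.odd_iff.mpr hmod

theorem sinner_row_row {n : ℕ} (M : Matrix (Fin n) (Fin n) ℂ) (i j : Fin n) :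
    sinner (M.row i) (M.row j) = (M * Mᴴ) i j := by
  simp [sinner, Matrix.row, Matrix.mul_apply]

theorem isUnit_of_mul_conjTranspose_eq_natCast_smul_one {n : ℕ} {M : Matrix (Fin n) (Fin n) ℂ}
    (h : M * Mᴴ = (n : ℂ) • 1) : IsUnit M := by
  rw [Matrix.isUnit_iff_isUnit_det, isUnit_iff_ne_zero]
  intro h0
  have hdet := congrArg Matrix.det h
  rw [Matrix.det_mul, h0, zero_mul, Matrix.det_smul, Matrix.det_one, Fintype.card_fin,
    mul_one] at hdet
  rcases n with _ | n
  · simp at hdet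
  · exact pow_ne_zero _ (Nat.cast_ne_zero.mpr n.succ_ne_zero) hdet.symm

theorem isOrthBasis_image_row {n : ℕ} {M : Matrix (Fin n) (Fin n) ℂ}
    (h : M * Mᴴ = (n : ℂ) • 1) :
    Function.Injective M.row ∧ IsOrthBasis (Finset.univ.image M.row) := by
  have hlin : LinearIndependent ℂ M.row :=
    Matrix.linearIndependent_rows_of_isUnit (isUnit_of_mul_conjTranspose_eq_natCast_smul_one h)
  refine ⟨hlin.injective, ?_, ?_, ?_⟩
  · simp only [Finset.mem_image, Finset.mem_univ, true_and]
    rintro _ ⟨i, rfl⟩ _ ⟨j, rfl⟩ hij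
    rw [sinner_row_row, h, Matrix.smul_apply, Matrix.one_apply_ne (fun e => hij (by rw [e])),
      smul_zero]
  · change LinearIndepOn ℂ id (Finset.univ.image M.row : Set (Fin n → ℂ))
    rw [Finset.coe_image, Finset.coe_univ, Set.image_univ]
    exact (linearIndepOn_id_range_iff hlin.injective).mpr hlin
  · rw [Finset.coe_image, Finset.coe_univ, Set.image_univ]
    exact hlin.span_eq_top_of_card_eq_finrank' (by simp)

theorem existsUnique_row_of_mul_conjTranspose_eq_natCast_smul_one {n : ℕ}
    {P : (Fin n → ℂ) → Prop} (hP : ∀ b, IsOrthBasis b → ∃! x, x ∈ b ∧ P x)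
    {M : Matrix (Fin n) (Fin n) ℂ} (h : M * Mᴴ = (n : ℂ) • 1) : ∃! i, P (M.row i) := by
  obtain ⟨hinj, hb⟩ := isOrthBasis_image_row h
  obtain ⟨_, ⟨hx, hPx⟩, huniq⟩ := hP _ hb
  obtain ⟨i, -, rfl⟩ := Finset.mem_image.mp hx
  exact ⟨i, hPx, fun j hj => hinj (huniq _ ⟨Finset.mem_image_of_mem _ (Finset.mem_univ j), hj⟩)⟩

theorem mul_diagonal_mul_conjTranspose_of_norm_eq_one {𝕜 m n : Type*} [RCLike 𝕜] [Fintype n]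
    [DecidableEq n] (M : Matrix m n 𝕜) {d : n → 𝕜} (hd : ∀ j, ‖d j‖ = 1) :
    (M * diagonal d) * (M * diagonal d)ᴴ = M * Mᴴ := by
  have hdd : diagonal d * diagonal (star d) = 1 := by
    rw [diagonal_mul_diagonal, ← diagonal_one]
    congr 1
    funext j
    simp [RCLike.mul_conj, hd]
  rw [conjTranspose_mul, diagonal_conjTranspose, Matrix.mul_assoc,
    ← Matrix.mul_assoc (diagonal d), hdd, Matrix.one_mul]

theorem IsSHadamard.hadamard_self_mul_conjTranspose {n : ℕ} {H : Matrix (Fin n) (Fin n) ℂ}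
    (hH : IsSHadamard H) : (H ⊙ H) * (H ⊙ H)ᴴ = (n : ℂ) • 1 := by
  ext k l
  simp only [mul_apply, hadamard_apply, conjTranspose_apply, Matrix.smul_apply, star_mul',
    RCLike.star_def]
  rcases eq_or_ne k l with rfl | hkl
  · have hterm : ∀ j, H k j * H k j * (starRingEnd ℂ (H k j) * starRingEnd ℂ (H k j)) = 1 :=
      fun j => by
        rw [mul_mul_mul_comm, RCLike.mul_conj, hH.2.1]
        norm_num
    simp [hterm]
  · simpa [one_apply_ne hkl, pow_two] using hH.2.2 k l hkl

/-- If `n` is even and an S-Hadamard matrix of order `n` exists, then there is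
no function `f : ℂ^n → {0,1}` such that every orthogonal basis of `ℂ^n`
contains exactly one vector `x` with `f x = 1`. -/
theorem no_ks_coloring_of_sHadamard {n : ℕ} (hn : Even n)
    (hH : ∃ H : Matrix (Fin n) (Fin n) ℂ, IsSHadamard H) :
    ¬ ∃ f : (Fin n → ℂ) → Fin 2,
        ∀ b : Finset (Fin n → ℂ), IsOrthBasis b →
          ∃! x, x ∈ b ∧ f x = 1 := by
  rintro ⟨f, hf⟩
  obtain ⟨H, hH⟩ := hH
  set w : Fin n → Fin n → Fin n → ℂ := fun k => (H * diagonal (H.row k)).row with hw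
  have hw_symm : ∀ k l, w k l = w l k := fun k l => by
    funext j
    simp [hw, Matrix.row, mul_comm]
  have hw_diag : ∀ k, (H ⊙ H).row k = w k k := fun k => by
    funext j
    simp [hw, Matrix.row]
  have hrows : ∀ k, ∃! l, f (w k l) = 1 := fun k =>
    existsUnique_row_of_mul_conjTranspose_eq_natCast_smul_one hf
      ((mul_diagonal_mul_conjTranspose_of_norm_eq_one H (d := H.row k) (hH.2.1 k)).trans hH.1)
  choose σ hσ hσ_uniq using hrows
  have hσ_invol : Function.Involutive σ := fun k =>
    (hσ_uniq (σ k) k (show f (w (σ k) k) = 1 by rw [hw_symm]; exact hσ k)).symm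
  have hσ_fixed : ∃! k, σ k = k := by
    refine (existsUnique_congr fun k => ?_).mp
      (existsUnique_row_of_mul_conjTranspose_eq_natCast_smul_one hf
        hH.hadamard_self_mul_conjTranspose)
    rw [hw_diag]
    exact ⟨fun hk => (hσ_uniq k k hk).symm, fun hk => by simpa [hk] using hσ k⟩
  have hodd := hσ_invol.odd_card_of_existsUnique_isFixedPt hσ_fixed
  rw [Fintype.card_fin] at hodd
  exact Nat.not_even_iff_odd.mpr hodd hn
end

section
/- Suppose g > 2 and there exists a generalized Hadamard matrix GH(g, λ) over ℤ_g. Then there exists an S-Hadamard matrix of order gλ. -/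
open scoped Classical

/-!
Let `ψ` be the standard additive character of `ℤ_g` and put `H = ψ ∘ M`. Because the differences
of two distinct rows of `M` run through `ℤ_g` uniformly, the inner product of the corresponding rows
of `H` is `λ ∑ₐ ψ a`, and that of their entrywise squares is `λ ∑ₐ ψ a ^ 2`. Both characters
`ψ` and `ψ²` are nontrivial once `g > 2`, so both sums vanish.
-/

open Finset ComplexConjugate

lemma AddChar.mul_conj_eq_sub {G : Type*} [AddCommGroup G] [Finite G] (ψ : AddChar G ℂ)
    (a b : G) : ψ a * conj (ψ b) = ψ (a - b) := by
  rw [← AddChar.map_neg_eq_conj, ← AddChar.map_add_eq_mul, sub_eq_add_neg]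

lemma ZMod.stdAddChar_pow_ne_zero {g n : ℕ} [NeZero g] (hn : ¬ g ∣ n) :
    (ZMod.stdAddChar (N := g)) ^ n ≠ 0 := by
  rw [AddChar.pow_mulShift]
  exact ZMod.isPrimitive_stdAddChar g ((ZMod.natCast_eq_zero_iff n g).not.mpr hn)

namespace IsGH

variable {g lam : ℕ} [NeZero g] {M : Matrix (Fin (g * lam)) (Fin (g * lam)) (ZMod g)}

theorem sum_comp_sub (hM : IsGH g lam M) {k l : Fin (g * lam)} (hkl : k ≠ l)
    {R : Type*} [AddCommMonoid R] (F : ZMod g → R) :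
    ∑ j, F (M k j - M l j) = lam • ∑ a, F a := by
  rw [← sum_fiberwise' univ (fun j => M k j - M l j) F, smul_sum]
  simp only [sum_const, hM k l hkl]

theorem sum_mul_conj_eq_zero (hM : IsGH g lam M) {ψ : AddChar (ZMod g) ℂ} (hψ : ψ ≠ 0)
    {k l : Fin (g * lam)} (hkl : k ≠ l) :
    ∑ j, ψ (M k j) * conj (ψ (M l j)) = 0 := by
  simp only [ψ.mul_conj_eq_sub]
  rw [hM.sum_comp_sub hkl ψ, AddChar.sum_eq_zero_iff_ne_zero.mpr hψ, smul_zero]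

theorem isSHadamard_map (hM : IsGH g lam M) {ψ : AddChar (ZMod g) ℂ} (hψ : ψ ≠ 0)
    (hψ2 : ψ ^ 2 ≠ 0) : IsSHadamard (M.map ψ) := by
  refine ⟨?_, fun i j => AddChar.norm_apply ψ _, fun k l hkl => ?_⟩
  · ext k l
    simp only [Matrix.mul_apply, Matrix.conjTranspose_apply, Matrix.map_apply, Matrix.smul_apply,
      Matrix.one_apply, RCLike.star_def]
    split_ifs with hkl
    · subst hkl
      simp [ψ.mul_conj_eq_sub]
    · simpa using hM.sum_mul_conj_eq_zero hψ hkl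
  · simpa [← map_pow] using hM.sum_mul_conj_eq_zero hψ2 hkl

end IsGH

/-- If `g > 2` and a generalized Hadamard matrix GH(g,λ) over `ℤ_g` exists,
then an S-Hadamard matrix of order `gλ` exists. -/
theorem exists_sHadamard_of_GH (g lam : ℕ) (hg : 2 < g)
    (hM : ∃ M : Matrix (Fin (g * lam)) (Fin (g * lam)) (ZMod g), IsGH g lam M) :
    ∃ H : Matrix (Fin (g * lam)) (Fin (g * lam)) ℂ, IsSHadamard H := by
  obtain ⟨M, hM⟩ := hM
  have : NeZero g := ⟨by omega⟩
  exact ⟨_, hM.isSHadamard_map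
    (by simpa using ZMod.stdAddChar_pow_ne_zero (Nat.not_dvd_of_pos_of_lt one_pos (by omega)))
    (ZMod.stdAddChar_pow_ne_zero (Nat.not_dvd_of_pos_of_lt two_pos hg))⟩
end
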